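/- Continuous H²-norm of the trigonometric interpolant is controlled by the discrete H²-norm: let m = 2R+1 be odd, h = L/m, and let φ be the complex grid function determined by coefficients c : {−R,…,R}³ → ℂ via φ_{i,j,k} = Σ_{r,s,t=−R}^{R} c_{r,s,t} e^{2πi(r x_i + s y_j + t z_k)/L}. Then L³ Σ_{r,s,t=−R}^{R} [ 1 + (2π/L)²(r² + s² + t²) + 2(2π/L)⁴(r⁴ + s⁴ + t⁴) ] |c_{r,s,t}|² ≤ 2(π/2)⁴ ‖φ‖_{2,2}². -/

import Mathlib

open Finset Real

/-- The grid point `x_i = (i - 1/2) h`. -/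
noncomputable def xg (h : ℝ) (i : ℤ) : ℝ := ((i : ℝ) - 1 / 2) * h

/-- The complex grid function determined by Fourier coefficients `c` on `{-R,…,R}³`:
`φ_{i,j,k} = Σ_{r,s,t=-R}^{R} c_{r,s,t} e^{2πi(r x_i + s y_j + t z_k)/L}`
(as a function of the integer indices, it is automatically `m`-periodic, `m = 2R+1`). -/
noncomputable def fgrid (L h : ℝ) (R : ℕ) (c : ℤ × ℤ × ℤ → ℂ) (i j k : ℤ) : ℂ :=
  ∑ r ∈ Finset.Icc (-(R : ℤ)) (R : ℤ), ∑ s ∈ Finset.Icc (-(R : ℤ)) (R : ℤ),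
    ∑ t ∈ Finset.Icc (-(R : ℤ)) (R : ℤ),
      c (r, s, t) *
        Complex.exp (2 * (Real.pi : ℂ) * Complex.I *
          ((r * xg h i + s * xg h j + t * xg h k : ℝ) : ℂ) / (L : ℂ))

/-!
The sampled modes `i ↦ exp (2πi r (i - 1/2) / m)` with `|r| ≤ R` are orthogonal over one period
of the grid because `2R < m`, so the discrete `L²` norm of the interpolant is `L³ Σ |c|²`
(discrete Parseval). A unit shift multiplies the mode `r` by the twiddle factor
`ω_r = exp (2πi r / m)`, hence forward differences and the discrete Laplacian act diagonally, with
symbols `(ω_r - 1) / h` and `-(λ_r + λ_s + λ_t) / h²`, where `λ_r = |ω_r - 1|² = 4 sin² (π r / m)`.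
Jordan's inequality `sin x ≥ 2x/π` on `[0, π/2]` gives `λ_r / h² ≥ (4/π²) (2π r / L)²`, after
which comparing the weights mode by mode is elementary.
-/

open ComplexConjugate

def IsOrthogonalOn {ι G : Type*} [DecidableEq ι] (A : Finset ι) (S : Finset G)
    (e : ι → G → ℂ) (N : ℝ) : Prop :=
  ∀ a ∈ A, ∀ b ∈ A, ∑ g ∈ S, e a g * conj (e b g) = if a = b then (N : ℂ) else 0

namespace IsOrthogonalOn

variable {ι κ G H : Type*} [DecidableEq ι] [DecidableEq κ] {A : Finset ι} {S : Finset G}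
  {e : ι → G → ℂ} {N : ℝ}

lemma prod {B : Finset κ} {T : Finset H} {f : κ → H → ℂ} {M : ℝ}
    (he : IsOrthogonalOn A S e N) (hf : IsOrthogonalOn B T f M) :
    IsOrthogonalOn (A ×ˢ B) (S ×ˢ T) (fun a g => e a.1 g.1 * f a.2 g.2) (N * M) := by
  intro a ha b hb
  rw [mem_product] at ha hb
  calc ∑ g ∈ S ×ˢ T, e a.1 g.1 * f a.2 g.2 * conj (e b.1 g.1 * f b.2 g.2)
      = (∑ x ∈ S, e a.1 x * conj (e b.1 x)) * ∑ y ∈ T, f a.2 y * conj (f b.2 y) := by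
        rw [sum_product, sum_mul_sum]
        refine sum_congr rfl fun x _ => sum_congr rfl fun y _ => ?_
        rw [map_mul]; ring
    _ = if a = b then ((N * M : ℝ) : ℂ) else 0 := by
        rw [he _ ha.1 _ hb.1, hf _ ha.2 _ hb.2]
        simp only [Prod.ext_iff]
        split_ifs <;> simp_all

lemma sum_norm_sq (he : IsOrthogonalOn A S e N) (c : ι → ℂ) :
    ∑ g ∈ S, ‖∑ a ∈ A, c a * e a g‖ ^ 2 = N * ∑ a ∈ A, ‖c a‖ ^ 2 := by
  apply Complex.ofReal_injective
  push_cast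
  simp only [← Complex.mul_conj', map_sum, map_mul, sum_mul_sum]
  calc ∑ g ∈ S, ∑ a ∈ A, ∑ b ∈ A, c a * e a g * (conj (c b) * conj (e b g))
      = ∑ a ∈ A, ∑ b ∈ A, c a * conj (c b) * ∑ g ∈ S, e a g * conj (e b g) := by
        rw [sum_comm]
        refine sum_congr rfl fun a _ => ?_
        rw [sum_comm]
        refine sum_congr rfl fun b _ => ?_
        rw [mul_sum]
        refine sum_congr rfl fun g _ => ?_
        ring
    _ = N * ∑ a ∈ A, c a * conj (c a) := by
        rw [mul_sum]
        refine sum_congr rfl fun a ha => ?_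
        rw [sum_congr rfl fun b hb => by rw [he a ha b hb]]
        simp [ha, mul_comm]

end IsOrthogonalOn

noncomputable def twiddle (m : ℕ) (r : ℤ) : ℂ := Complex.exp (2 * π * Complex.I * r / m)

-- `e^{2πi r x_i / L}` at the cell centre `x_i = (i - 1/2) L / m`
noncomputable def gridMode (m : ℕ) (r i : ℤ) : ℂ :=
  Complex.exp (2 * π * Complex.I * r * (i - 1 / 2) / m)

lemma gridMode_add_one (m : ℕ) (r i : ℤ) :
    gridMode m r (i + 1) = gridMode m r i * twiddle m r := by
  rw [gridMode, gridMode, twiddle, ← Complex.exp_add]; push_cast; ring_nf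

lemma gridMode_sub_one (m : ℕ) (r i : ℤ) :
    gridMode m r (i - 1) = gridMode m r i * twiddle m (-r) := by
  rw [gridMode, gridMode, twiddle, ← Complex.exp_add]; push_cast; ring_nf

lemma gridMode_one_add_natCast (m : ℕ) (r : ℤ) (k : ℕ) :
    gridMode m r (1 + k) = gridMode m r 1 * twiddle m r ^ k := by
  rw [gridMode, gridMode, twiddle, ← Complex.exp_nat_mul, ← Complex.exp_add]; push_cast; ring_nf

lemma gridMode_mul_conj (m : ℕ) (r r' i : ℤ) :
    gridMode m r i * conj (gridMode m r' i) = gridMode m (r - r') i := by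
  rw [gridMode, gridMode, gridMode, ← Complex.exp_conj, ← Complex.exp_add]
  congr 1
  simp only [map_div₀, map_mul, map_sub, map_ofNat, map_one, Complex.conj_I, Complex.conj_ofReal,
    map_intCast, map_natCast]
  push_cast; ring

lemma twiddle_pow_self {m : ℕ} (hm : m ≠ 0) (r : ℤ) : twiddle m r ^ m = 1 := by
  rw [twiddle, ← Complex.exp_nat_mul, ← Complex.exp_int_mul_two_pi_mul_I r]
  congr 1; field_simp

lemma twiddle_ne_one {m : ℕ} (hm : m ≠ 0) {r : ℤ} (hr : ¬ (m : ℤ) ∣ r) : twiddle m r ≠ 1 := by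
  rw [twiddle, show 2 * π * Complex.I * r / m = r * (2 * π * Complex.I / m) by ring,
    Complex.exp_int_mul, Ne, (Complex.isPrimitiveRoot_exp m hm).zpow_eq_one_iff_dvd]
  exact hr

lemma sum_gridMode_eq_zero {m : ℕ} {r : ℤ} (hr : ¬ (m : ℤ) ∣ r) :
    ∑ i ∈ Icc (1 : ℤ) m, gridMode m r i = 0 := by
  rcases eq_or_ne m 0 with rfl | hm
  · simp
  rw [Int.Icc_eq_finset_map, sum_map]
  simp only [add_sub_cancel_right, Int.toNat_natCast, Function.Embedding.trans_apply,
    Nat.castEmbedding_apply, addLeftEmbedding_apply, gridMode_one_add_natCast, ← mul_sum,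
    geom_sum_eq (twiddle_ne_one hm hr), twiddle_pow_self hm, sub_self, zero_div, mul_zero]

lemma isOrthogonalOn_gridMode {R m : ℕ} (hR : 2 * R < m) :
    IsOrthogonalOn (Icc (-(R : ℤ)) R) (Icc (1 : ℤ) m) (gridMode m) m := by
  intro r hr r' hr'
  rw [mem_Icc] at hr hr'
  simp only [gridMode_mul_conj]
  split_ifs with hrr
  · simp [hrr, gridMode]
  · refine sum_gridMode_eq_zero fun hdvd => hrr (sub_eq_zero.mp ?_)
    exact Int.eq_zero_of_abs_lt_dvd hdvd (abs_sub_lt_iff.mpr ⟨by omega, by omega⟩)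

noncomputable def freqBox (R : ℕ) : Finset (ℤ × ℤ × ℤ) :=
  Icc (-(R : ℤ)) R ×ˢ Icc (-(R : ℤ)) R ×ˢ Icc (-(R : ℤ)) R

noncomputable def trigGrid (m R : ℕ) (a : ℤ × ℤ × ℤ → ℂ) (i j k : ℤ) : ℂ :=
  ∑ v ∈ freqBox R, a v * (gridMode m v.1 i * (gridMode m v.2.1 j * gridMode m v.2.2 k))

lemma fgrid_eq_trigGrid {L h : ℝ} {m : ℕ} (hL : L ≠ 0) (hh : h = L / m) (R : ℕ)
    (c : ℤ × ℤ × ℤ → ℂ) : fgrid L h R c = trigGrid m R c := by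
  funext i j k
  simp only [fgrid, trigGrid, freqBox, sum_product]
  refine sum_congr rfl fun r _ => sum_congr rfl fun s _ => sum_congr rfl fun t _ => ?_
  rw [gridMode, gridMode, gridMode, ← Complex.exp_add, ← Complex.exp_add]
  congr 2
  subst hh
  push_cast [xg]
  field_simp
  rw [mul_div_mul_left _ _ (Complex.ofReal_ne_zero.mpr hL)]
  ring

lemma sum_norm_sq_trigGrid {R m : ℕ} (hR : 2 * R < m) (a : ℤ × ℤ × ℤ → ℂ) :
    ∑ i ∈ Icc (1 : ℤ) m, ∑ j ∈ Icc (1 : ℤ) m, ∑ k ∈ Icc (1 : ℤ) m, ‖trigGrid m R a i j k‖ ^ 2 =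
      m ^ 3 * ∑ v ∈ freqBox R, ‖a v‖ ^ 2 := by
  have hmode := isOrthogonalOn_gridMode hR
  have hparseval := (hmode.prod (hmode.prod hmode)).sum_norm_sq a
  rw [sum_product] at hparseval
  simp only [sum_product (s := Icc (1 : ℤ) m)] at hparseval
  rwa [show (m : ℝ) ^ 3 = m * (m * m) by ring]

section Stencils

variable (m R : ℕ) (a : ℤ × ℤ × ℤ → ℂ) (h : ℂ) (i j k : ℤ)

lemma trigGrid_fwdDiff_fst :
    (trigGrid m R a (i + 1) j k - trigGrid m R a i j k) / h =
      trigGrid m R (fun v => a v * ((twiddle m v.1 - 1) / h)) i j k := by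
  simp only [trigGrid, ← sum_sub_distrib, sum_div, gridMode_add_one]
  exact sum_congr rfl fun v _ => by ring

lemma trigGrid_fwdDiff_snd :
    (trigGrid m R a i (j + 1) k - trigGrid m R a i j k) / h =
      trigGrid m R (fun v => a v * ((twiddle m v.2.1 - 1) / h)) i j k := by
  simp only [trigGrid, ← sum_sub_distrib, sum_div, gridMode_add_one]
  exact sum_congr rfl fun v _ => by ring

lemma trigGrid_fwdDiff_thd :
    (trigGrid m R a i j (k + 1) - trigGrid m R a i j k) / h =
      trigGrid m R (fun v => a v * ((twiddle m v.2.2 - 1) / h)) i j k := by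
  simp only [trigGrid, ← sum_sub_distrib, sum_div, gridMode_add_one]
  exact sum_congr rfl fun v _ => by ring

lemma trigGrid_laplacian :
    (trigGrid m R a (i + 1) j k + trigGrid m R a (i - 1) j k + trigGrid m R a i (j + 1) k
        + trigGrid m R a i (j - 1) k + trigGrid m R a i j (k + 1) + trigGrid m R a i j (k - 1)
        - 6 * trigGrid m R a i j k) / h ^ 2 =
      trigGrid m R (fun v => a v * (((twiddle m v.1 + twiddle m (-v.1) - 2)
        + (twiddle m v.2.1 + twiddle m (-v.2.1) - 2)
        + (twiddle m v.2.2 + twiddle m (-v.2.2) - 2)) / h ^ 2)) i j k := by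
  simp only [trigGrid, mul_sum, ← sum_add_distrib, ← sum_sub_distrib, sum_div, gridMode_add_one,
    gridMode_sub_one]
  exact sum_congr rfl fun v _ => by ring

end Stencils

lemma four_mul_abs_div_le_norm_twiddle_sub_one {m : ℕ} {r : ℤ} (hr : 2 * |(r : ℝ)| ≤ m) :
    4 * |(r : ℝ)| / m ≤ ‖twiddle m r - 1‖ := by
  rcases Nat.eq_zero_or_pos m with rfl | hm
  · simp
  have hm' : (0 : ℝ) < m := by exact_mod_cast hm
  set y := π * r / m
  have hy : |y| ≤ π / 2 := by
    rw [abs_div, abs_mul, abs_of_pos pi_pos, abs_of_pos hm', div_le_iff₀ hm']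
    nlinarith [pi_pos]
  have hsin : 2 / π * |y| ≤ |Real.sin y| := by
    have := mul_le_sin (abs_nonneg y) hy
    rcases abs_cases y with ⟨hy', _⟩ | ⟨hy', _⟩ <;> rw [hy'] at this ⊢
    · exact this.trans (le_abs_self _)
    · rw [Real.sin_neg] at this; exact this.trans (neg_le_abs _)
  have htw : twiddle m r = Complex.exp (Complex.I * ((2 * y : ℝ) : ℂ)) := by
    rw [twiddle]; congr 1; push_cast [y]; ring
  rw [htw, Complex.norm_exp_I_mul_ofReal_sub_one, mul_div_cancel_left₀ _ two_ne_zero, norm_mul,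
    Real.norm_eq_abs, Real.norm_eq_abs, abs_two]
  have : 4 * |(r : ℝ)| / m = 2 * (2 / π * |y|) := by
    simp only [y, abs_div, abs_mul, abs_of_pos pi_pos, abs_of_pos hm']; field_simp; ring
  rw [this]; linarith

lemma twiddle_add_twiddle_neg_sub_two (m : ℕ) (r : ℤ) :
    twiddle m r + twiddle m (-r) - 2 = -((‖twiddle m r - 1‖ ^ 2 : ℝ) : ℂ) := by
  have hconj : twiddle m (-r) = conj (twiddle m r) := by
    rw [twiddle, twiddle, ← Complex.exp_conj]; congr 1
    simp only [map_div₀, map_mul, map_ofNat, Complex.conj_I, Complex.conj_ofReal, map_intCast,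
      map_natCast]
    push_cast; ring
  have hnorm : twiddle m r * conj (twiddle m r) = 1 := by
    rw [Complex.mul_conj', twiddle,
      show 2 * π * Complex.I * r / m = ((2 * π * r / m : ℝ) : ℂ) * Complex.I by push_cast; ring,
      Complex.norm_exp_ofReal_mul_I]; simp
  rw [Complex.ofReal_pow, ← Complex.mul_conj', map_sub, map_one, hconj]
  linear_combination hnorm

noncomputable def laplacianSymbol (m : ℕ) (v : ℤ × ℤ × ℤ) : ℝ :=
  ‖twiddle m v.1 - 1‖ ^ 2 + ‖twiddle m v.2.1 - 1‖ ^ 2 + ‖twiddle m v.2.2 - 1‖ ^ 2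

section DiscreteNorms

variable {R m : ℕ} (a : ℤ × ℤ × ℤ → ℂ) (h : ℝ)

lemma sum_norm_sq_fwdDiff_trigGrid (hR : 2 * R < m) :
    ∑ i ∈ Icc (1 : ℤ) m, ∑ j ∈ Icc (1 : ℤ) m, ∑ k ∈ Icc (1 : ℤ) m,
      (‖(trigGrid m R a (i + 1) j k - trigGrid m R a i j k) / (h : ℂ)‖ ^ 2
        + ‖(trigGrid m R a i (j + 1) k - trigGrid m R a i j k) / (h : ℂ)‖ ^ 2
        + ‖(trigGrid m R a i j (k + 1) - trigGrid m R a i j k) / (h : ℂ)‖ ^ 2) =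
      m ^ 3 * ∑ v ∈ freqBox R, laplacianSymbol m v / h ^ 2 * ‖a v‖ ^ 2 := by
  simp only [sum_add_distrib, trigGrid_fwdDiff_fst, trigGrid_fwdDiff_snd, trigGrid_fwdDiff_thd,
    sum_norm_sq_trigGrid hR, ← mul_add]
  rw [← sum_add_distrib, ← sum_add_distrib]
  refine congrArg _ (sum_congr rfl fun v _ => ?_)
  simp only [laplacianSymbol, norm_mul, norm_div, Complex.norm_real, Real.norm_eq_abs, mul_pow,
    div_pow, sq_abs]
  ring

lemma sum_norm_sq_laplacian_trigGrid (hR : 2 * R < m) :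
    ∑ i ∈ Icc (1 : ℤ) m, ∑ j ∈ Icc (1 : ℤ) m, ∑ k ∈ Icc (1 : ℤ) m,
      ‖(trigGrid m R a (i + 1) j k + trigGrid m R a (i - 1) j k + trigGrid m R a i (j + 1) k
        + trigGrid m R a i (j - 1) k + trigGrid m R a i j (k + 1) + trigGrid m R a i j (k - 1)
        - 6 * trigGrid m R a i j k) / (h : ℂ) ^ 2‖ ^ 2 =
      m ^ 3 * ∑ v ∈ freqBox R, (laplacianSymbol m v / h ^ 2) ^ 2 * ‖a v‖ ^ 2 := by
  simp only [trigGrid_laplacian, sum_norm_sq_trigGrid hR, twiddle_add_twiddle_neg_sub_two]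
  refine congrArg _ (sum_congr rfl fun v _ => ?_)
  rw [laplacianSymbol, norm_mul, ← neg_add, ← neg_add, ← Complex.ofReal_add,
    ← Complex.ofReal_add, ← Complex.ofReal_pow, neg_div, ← Complex.ofReal_div, norm_neg,
    Complex.norm_real, Real.norm_eq_abs, mul_pow, sq_abs]
  ring

end DiscreteNorms

lemma two_pi_div_sq_mul_sq_le {L h : ℝ} {m : ℕ} (hL : L ≠ 0) (hm : m ≠ 0) (hh : h = L / m)
    {r : ℤ} (hr : 2 * |(r : ℝ)| ≤ m) :
    (2 * π / L) ^ 2 * (r : ℝ) ^ 2 ≤ π ^ 2 / 4 * (‖twiddle m r - 1‖ ^ 2 / h ^ 2) := by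
  calc (2 * π / L) ^ 2 * (r : ℝ) ^ 2 = π ^ 2 / 4 * ((4 * |(r : ℝ)| / m) ^ 2 / h ^ 2) := by
        subst hh
        field_simp
        rw [sq_abs]
        ring
    _ ≤ π ^ 2 / 4 * (‖twiddle m r - 1‖ ^ 2 / h ^ 2) := by
        gcongr
        exact four_mul_abs_div_le_norm_twiddle_sub_one hr

lemma one_add_add_two_mul_sq_le {X Y Z u v w : ℝ} (hX : 0 ≤ X) (hY : 0 ≤ Y) (hZ : 0 ≤ Z)
    (hXu : X ≤ π ^ 2 / 4 * u) (hYv : Y ≤ π ^ 2 / 4 * v) (hZw : Z ≤ π ^ 2 / 4 * w) :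
    1 + (X + Y + Z) + 2 * (X ^ 2 + Y ^ 2 + Z ^ 2) ≤
      2 * (π / 2) ^ 4 * (1 + (u + v + w) + (u + v + w) ^ 2) := by
  have hπ2 : 9 ≤ π ^ 2 := by nlinarith [pi_gt_three]
  have hu : 0 ≤ u := nonneg_of_mul_nonneg_right (hX.trans hXu) (by positivity)
  have hv : 0 ≤ v := nonneg_of_mul_nonneg_right (hY.trans hYv) (by positivity)
  have hw : 0 ≤ w := nonneg_of_mul_nonneg_right (hZ.trans hZw) (by positivity)
  have hsq : 2 * (X ^ 2 + Y ^ 2 + Z ^ 2) ≤ π ^ 4 / 8 * (u ^ 2 + v ^ 2 + w ^ 2) := by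
    have := pow_le_pow_left₀ hX hXu 2
    have := pow_le_pow_left₀ hY hYv 2
    have := pow_le_pow_left₀ hZ hZw 2
    nlinarith
  nlinarith [mul_nonneg hu hv, mul_nonneg hv hw, mul_nonneg hu hw]

noncomputable def sobolevWeight (L : ℝ) (v : ℤ × ℤ × ℤ) : ℝ :=
  1 + (2 * π / L) ^ 2 * ((v.1 : ℝ) ^ 2 + (v.2.1 : ℝ) ^ 2 + (v.2.2 : ℝ) ^ 2)
    + 2 * (2 * π / L) ^ 4 * ((v.1 : ℝ) ^ 4 + (v.2.1 : ℝ) ^ 4 + (v.2.2 : ℝ) ^ 4)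

lemma sobolevWeight_le {L h : ℝ} {R m : ℕ} (hL : L ≠ 0) (hR : 2 * R < m) (hh : h = L / m)
    {v : ℤ × ℤ × ℤ} (hv : v ∈ freqBox R) :
    sobolevWeight L v ≤
      2 * (π / 2) ^ 4 * (1 + laplacianSymbol m v / h ^ 2 + (laplacianSymbol m v / h ^ 2) ^ 2) := by
  have hcoord : ∀ r ∈ Icc (-(R : ℤ)) R,
      (2 * π / L) ^ 2 * (r : ℝ) ^ 2 ≤ π ^ 2 / 4 * (‖twiddle m r - 1‖ ^ 2 / h ^ 2) := by
    intro r hr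
    refine two_pi_div_sq_mul_sq_le hL (by omega) hh ?_
    rw [mem_Icc] at hr
    have : |r| ≤ R := abs_le.mpr hr
    exact_mod_cast (by omega : 2 * |r| ≤ m)
  simp only [freqBox, mem_product] at hv
  calc sobolevWeight L v
      = 1 + ((2 * π / L) ^ 2 * (v.1 : ℝ) ^ 2 + (2 * π / L) ^ 2 * (v.2.1 : ℝ) ^ 2
          + (2 * π / L) ^ 2 * (v.2.2 : ℝ) ^ 2) + 2 * (((2 * π / L) ^ 2 * (v.1 : ℝ) ^ 2) ^ 2
          + ((2 * π / L) ^ 2 * (v.2.1 : ℝ) ^ 2) ^ 2 + ((2 * π / L) ^ 2 * (v.2.2 : ℝ) ^ 2) ^ 2) := by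
        rw [sobolevWeight]; ring
    _ ≤ _ := one_add_add_two_mul_sq_le (by positivity) (by positivity) (by positivity)
        (hcoord _ hv.1) (hcoord _ hv.2.1) (hcoord _ hv.2.2)
    _ = _ := by rw [laplacianSymbol]; ring

/-- Continuous `H²`-norm of the trigonometric interpolant is controlled by the discrete
`H²`-norm: the discrete norms (`‖·‖₂²`, `‖∇_h·‖₂²`, `‖Δ_h·‖₂²`) are written out as grid sums. -/
theorem stmt15 (L : ℝ) (hL : 0 < L) (R : ℕ) (m : ℕ) (hm : m = 2 * R + 1)
    (h : ℝ) (hh : h = L / m) (c : ℤ × ℤ × ℤ → ℂ)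
    (Φ : ℤ → ℤ → ℤ → ℂ) (hΦ : Φ = fgrid L h R c) :
    L ^ 3 * ∑ r ∈ Finset.Icc (-(R : ℤ)) (R : ℤ), ∑ s ∈ Finset.Icc (-(R : ℤ)) (R : ℤ),
        ∑ t ∈ Finset.Icc (-(R : ℤ)) (R : ℤ),
          (1 + (2 * Real.pi / L) ^ 2 * ((r : ℝ) ^ 2 + (s : ℝ) ^ 2 + (t : ℝ) ^ 2)
              + 2 * (2 * Real.pi / L) ^ 4 * ((r : ℝ) ^ 4 + (s : ℝ) ^ 4 + (t : ℝ) ^ 4)) *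
            ‖c (r, s, t)‖ ^ 2 ≤
      2 * (Real.pi / 2) ^ 4 *
        ((h ^ 3 * ∑ i ∈ Finset.Icc (1 : ℤ) (m : ℤ), ∑ j ∈ Finset.Icc (1 : ℤ) (m : ℤ),
            ∑ k ∈ Finset.Icc (1 : ℤ) (m : ℤ), ‖Φ i j k‖ ^ 2)
          + (h ^ 3 * ∑ i ∈ Finset.Icc (1 : ℤ) (m : ℤ), ∑ j ∈ Finset.Icc (1 : ℤ) (m : ℤ),
              ∑ k ∈ Finset.Icc (1 : ℤ) (m : ℤ),
                (‖(Φ (i + 1) j k - Φ i j k) / (h : ℂ)‖ ^ 2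
                  + ‖(Φ i (j + 1) k - Φ i j k) / (h : ℂ)‖ ^ 2
                  + ‖(Φ i j (k + 1) - Φ i j k) / (h : ℂ)‖ ^ 2))
          + (h ^ 3 * ∑ i ∈ Finset.Icc (1 : ℤ) (m : ℤ), ∑ j ∈ Finset.Icc (1 : ℤ) (m : ℤ),
              ∑ k ∈ Finset.Icc (1 : ℤ) (m : ℤ),
                ‖(Φ (i + 1) j k + Φ (i - 1) j k + Φ i (j + 1) k + Φ i (j - 1) k
                    + Φ i j (k + 1) + Φ i j (k - 1) - 6 * Φ i j k) / (h : ℂ) ^ 2‖ ^ 2)) := by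
  subst hΦ
  have hR : 2 * R < m := by omega
  have hL3 : h ^ 3 * m ^ 3 = L ^ 3 := by
    rw [hh, ← mul_pow, div_mul_cancel₀ _ (Nat.cast_ne_zero.mpr (by omega))]
  rw [fgrid_eq_trigGrid hL.ne' hh, sum_norm_sq_trigGrid hR, sum_norm_sq_fwdDiff_trigGrid c h hR,
    sum_norm_sq_laplacian_trigGrid c h hR]
  calc _ = L ^ 3 * ∑ v ∈ freqBox R, sobolevWeight L v * ‖c v‖ ^ 2 := by
        simp only [freqBox, sum_product, sobolevWeight]
    _ ≤ L ^ 3 * ∑ v ∈ freqBox R, 2 * (π / 2) ^ 4 *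
          ((1 + laplacianSymbol m v / h ^ 2 + (laplacianSymbol m v / h ^ 2) ^ 2) * ‖c v‖ ^ 2) := by
        refine mul_le_mul_of_nonneg_left (sum_le_sum fun v hv => ?_) (by positivity)
        rw [← mul_assoc]
        exact mul_le_mul_of_nonneg_right (sobolevWeight_le hL.ne' hR hh hv) (by positivity)
    _ = _ := by
        rw [← hL3, ← mul_sum]
        simp only [add_mul, one_mul, sum_add_distrib]
        ring
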